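/- Let h be C¹ on (0,∞) and h* be C² on ℝ. The density σ⁺(x,y) = C e^{-h(x)/θ} e^{-h*(y)/θ} is a stationary solution of the Fokker–Planck equation for the system dx = λ x h*'(y) dt, dy = (−λ(x h'(x) − θ) − γ h*'(y)) dt + √(2γθ) dW; that is, −∂_x(λ x h*'(y) σ⁺) − ∂_y((−λ(x h'(x) − θ) − γ h*'(y))σ⁺) + γθ ∂²_y σ⁺ = 0 pointwise. -/

import Mathlib

/-! The drift splits into a Hamiltonian part `λ (x h*'(y), -(x h'(x) - θ))` and an
Ornstein–Uhlenbeck part `-γ h*'(y)` in `y`. The OU part carries zero probability current,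
`γθ ∂_y σ + γ h*'(y) σ = 0`, and the Hamiltonian part preserves `σ`, since
`∂_x(x h*' σ)` and `∂_y((x h' - θ) σ)` both equal `h*' σ (1 - x h' / θ)`. -/

open Real

section GibbsFactor

variable {φ : ℝ → ℝ} (θ : ℝ)

theorem hasDerivAt_exp_neg_div {φ' x : ℝ} (hφ : HasDerivAt φ φ' x) :
    HasDerivAt (fun t => exp (-φ t / θ)) (-(φ' / θ) * exp (-φ x / θ)) x :=
  (hφ.fun_neg.div_const θ).exp.congr_deriv (by ring)

theorem deriv_exp_neg_div (hφ : Differentiable ℝ φ) :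
    deriv (fun t => exp (-φ t / θ)) = fun t => -(deriv φ t / θ) * exp (-φ t / θ) :=
  funext fun t => (hasDerivAt_exp_neg_div θ (hφ t).hasDerivAt).deriv

theorem iteratedDeriv_two_const_mul_exp_neg_div (K : ℝ) (hφ : ContDiff ℝ 2 φ) (y : ℝ) :
    iteratedDeriv 2 (fun t => K * exp (-φ t / θ)) y =
      K * (((deriv φ y / θ) ^ 2 - deriv (deriv φ) y / θ) * exp (-φ y / θ)) := by
  have hφ₁ : Differentiable ℝ φ := hφ.differentiable two_ne_zero
  have hφ₂ : Differentiable ℝ (deriv φ) := (hφ.deriv' (n := 1)).differentiable one_ne_zero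
  have hsecond : HasDerivAt (fun t => -(deriv φ t / θ) * exp (-φ t / θ))
      (((deriv φ y / θ) ^ 2 - deriv (deriv φ) y / θ) * exp (-φ y / θ)) y :=
    (((hφ₂ y).hasDerivAt.div_const θ).fun_neg.fun_mul
      (hasDerivAt_exp_neg_div θ (hφ₁ y).hasDerivAt)).congr_deriv (by ring)
  rw [iteratedDeriv_const_mul K (hφ.neg.div_const θ).exp.contDiffAt, iteratedDeriv_succ,
    iteratedDeriv_one, deriv_exp_neg_div θ hφ₁, hsecond.deriv]

end GibbsFactor

theorem fokker_planck_stationary_nonGaussian_general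
    (lam gam θ C : ℝ) (hθ : 0 < θ)
    (h : ℝ → ℝ) (hC1 : ContDiffOn ℝ 1 h (Set.Ioi 0))
    (hstar : ℝ → ℝ) (hC2 : ContDiff ℝ 2 hstar)
    (σ : ℝ → ℝ → ℝ)
    (hσ : σ = fun x y => C * exp (-h x / θ) * exp (-hstar y / θ)) :
    ∀ x : ℝ, 0 < x → ∀ y : ℝ,
      - deriv (fun x' => lam * x' * deriv hstar y * σ x' y) x
      - deriv (fun y' => (-lam * (x * deriv h x - θ) - gam * deriv hstar y') * σ x y') y
      + gam * θ * iteratedDeriv 2 (fun y' => σ x y') y = 0 := by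
  subst hσ
  intro x hx y
  beta_reduce
  have hh : HasDerivAt h (deriv h x) x :=
    ((hC1.contDiffAt (Ioi_mem_nhds hx)).differentiableAt one_ne_zero).hasDerivAt
  have hstar₁ : Differentiable ℝ hstar := hC2.differentiable two_ne_zero
  have hstar₂ : Differentiable ℝ (deriv hstar) :=
    (hC2.deriv' (n := 1)).differentiable one_ne_zero
  have drift_x := (((hasDerivAt_id' x).const_mul lam).mul_const (deriv hstar y)).fun_mul
    (((hasDerivAt_exp_neg_div θ hh).const_mul C).mul_const (exp (-hstar y / θ)))
  have drift_y :=
    (((hstar₂ y).hasDerivAt.const_mul gam).const_sub (-lam * (x * deriv h x - θ))).fun_mul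
    ((hasDerivAt_exp_neg_div θ (hstar₁ y).hasDerivAt).const_mul (C * exp (-h x / θ)))
  rw [drift_x.deriv, drift_y.deriv, iteratedDeriv_two_const_mul_exp_neg_div θ _ hC2]
  field_simp
  ring

theorem fokker_planck_stationary_nonGaussian
    (lam gam θ C : ℝ) (hlam : 0 < lam) (hgam : 0 < gam) (hθ : 0 < θ)
    (h : ℝ → ℝ) (hC1 : ContDiffOn ℝ 1 h (Set.Ioi 0))
    (hstar : ℝ → ℝ) (hC2 : ContDiff ℝ 2 hstar)
    (σ : ℝ → ℝ → ℝ)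
    (hσ : σ = fun x y => C * exp (-h x / θ) * exp (-hstar y / θ)) :
    ∀ x : ℝ, 0 < x → ∀ y : ℝ,
      - deriv (fun x' => lam * x' * deriv hstar y * σ x' y) x
      - deriv (fun y' => (-lam * (x * deriv h x - θ) - gam * deriv hstar y') * σ x y') y
      + gam * θ * iteratedDeriv 2 (fun y' => σ x y') y = 0 :=
  fokker_planck_stationary_nonGaussian_general lam gam θ C hθ h hC1 hstar hC2 σ hσ
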